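/- arXiv:math/0407151 — 2 statements merged into one kernel-verified Lean document; each statement's English description precedes it below -/
import Mathlib

section
/- With $\gamma_k$ the geodesic parameterization as above, the unsigned angle between the tangent vectors $\gamma_k'(0)$ and $\gamma_k'(1)$ equals $\left|2\arg\left(1 + \frac{\bar{z}_k}{a_k}\right)\right|$, i.e., $\frac{\operatorname{Re}(\gamma_k'(0)\overline{\gamma_k'(1)})}{|\gamma_k'(0)||\gamma_k'(1)|} = \cos\left(2\arg\left(1 + \frac{\bar{z}_k}{a_k}\right)\right)$. -/
/-!
The cosine of the angle between nonzero `u, v` is `Re (u / v) / |u / v|`. With `c = 1 - |z|²`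
the tangent vectors are `γ'(0) = c / a` and `γ'(1) = a c / (z̄ + a)²`, so
`γ'(0) / γ'(1) = w²` for `w = 1 + z̄ / a`, and `Re (w²) / |w²| = cos (2 arg w)`.
-/

open Complex ComplexConjugate

namespace Complex

theorem re_mul_conj_div_norm_mul (u : ℂ) {v : ℂ} (hv : v ≠ 0) :
    (u * conj v).re / (‖u‖ * ‖v‖) = (u / v).re / ‖u / v‖ := by
  have hv' : ‖v‖ ≠ 0 := norm_ne_zero_iff.mpr hv
  have hmul : u * conj v = (u / v) * ((‖v‖ ^ 2 : ℝ) : ℂ) := by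
    push_cast
    rw [← mul_conj']
    field_simp
  rw [hmul, re_mul_ofReal, norm_div]
  field_simp

theorem cos_two_mul_arg {w : ℂ} (hw : w ≠ 0) :
    Real.cos (2 * arg w) = (w ^ 2).re / ‖w ^ 2‖ := by
  have hnorm : ‖w‖ ^ 2 = w.re ^ 2 + w.im ^ 2 := by
    rw [Complex.sq_norm, normSq_apply]
    ring
  have hw' : ‖w‖ ≠ 0 := norm_ne_zero_iff.mpr hw
  rw [Real.cos_two_mul, cos_arg hw, norm_pow, sq w, mul_re]
  field_simp
  linear_combination -hnorm

theorem one_sub_conj_mul_ne_zero {z w : ℂ} (hz : ‖z‖ < 1) (hw : ‖w‖ < 1) :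
    1 - conj z * w ≠ 0 := by
  have hlt : ‖conj z * w‖ < 1 := by
    rw [norm_mul, norm_conj]
    exact mul_lt_one_of_nonneg_of_lt_one_left (norm_nonneg z) hz hw.le
  intro h
  rw [sub_eq_zero] at h
  simp [← h] at hlt

theorem conj_add_div_sub {z w : ℂ} (hzw : z ≠ w) :
    conj z + (1 - conj z * w) / (w - z) = (1 - (‖z‖ : ℂ) ^ 2) / (w - z) := by
  have : w - z ≠ 0 := sub_ne_zero.mpr hzw.symm
  rw [← conj_mul']
  field_simp
  ring

end Complex

theorem stmt_9 (zk zk1 : ℂ) (hzk : ‖zk‖ < 1) (hzk1 : ‖zk1‖ < 1)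
    (hne : zk ≠ zk1) (ak : ℂ) (hak : ak = (1 - conj zk * zk1) / (zk1 - zk))
    (γ' : ℝ → ℂ) (hγ' : ∀ t, γ' t = ak * (1 - (‖zk‖ : ℂ)^2) / ((t : ℂ) * conj zk + ak)^2) :
    (γ' 0 * conj (γ' 1)).re / (‖γ' 0‖ * ‖γ' 1‖) =
      Real.cos (2 * (1 + conj zk / ak).arg) := by
  have hsub : zk1 - zk ≠ 0 := sub_ne_zero.mpr hne.symm
  have hc : 1 - (‖zk‖ : ℂ) ^ 2 ≠ 0 := by
    rw [← ofReal_pow, ← ofReal_one, ← ofReal_sub, ofReal_ne_zero, sub_ne_zero]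
    exact (pow_lt_one₀ (norm_nonneg zk) hzk two_ne_zero).ne'
  have ha : ak ≠ 0 := hak ▸ div_ne_zero (one_sub_conj_mul_ne_zero hzk hzk1) hsub
  have hb : conj zk + ak ≠ 0 := by
    rw [hak, conj_add_div_sub hne]
    exact div_ne_zero hc hsub
  have hw_eq : 1 + conj zk / ak = (conj zk + ak) / ak := by
    field_simp
    ring
  have hw : 1 + conj zk / ak ≠ 0 := hw_eq ▸ div_ne_zero hb ha
  have h1 : γ' 1 ≠ 0 := by
    rw [hγ']
    push_cast
    simp [ha, hc, hb]
  have hratio : γ' 0 / γ' 1 = (1 + conj zk / ak) ^ 2 := by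
    rw [hγ', hγ', hw_eq]
    simp only [ofReal_zero, ofReal_one, zero_mul, zero_add, one_mul]
    field_simp
  rw [re_mul_conj_div_norm_mul _ h1, hratio, cos_two_mul_arg hw]
end

section
/- Let $z_k, z_{k+1}$ be in the closed unit disc with $\operatorname{Im}(\bar{z}_k z_{k+1}) \neq 0$, and let $c = \frac{(1+|z_k|^2)z_{k+1} - (1+|z_{k+1}|^2)z_k}{\bar{z}_k z_{k+1} - z_k\bar{z}_{k+1}}$. Then $\left|\frac{z_{k+1} - z_k}{2c - z_k - z_{k+1}}\right| = \left|\frac{\operatorname{Im}(\bar{z}_k z_{k+1})}{\operatorname{Re}(1 - \bar{z}_k z_{k+1})}\right|$. -/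
/-!
Write `w = conj a * b`. The denominator of the centre `c` is `w - conj w = 2 i Im w`, and
clearing it, `2c - a - b` factors as `(b - a)(2 - w - conj w) / (w - conj w)` with
`2 - w - conj w = 2 Re (1 - w)`. Hence `(b - a) / (2c - a - b) = i Im w / Re (1 - w)`.
-/

open Complex ComplexConjugate

/-- The centre of the circle through `a` and `b` orthogonal to the unit circle, whose arc
inside the disc is the hyperbolic geodesic from `a` to `b`. -/
noncomputable def geodesicCenter (a b : ℂ) : ℂ :=
  ((1 + (‖a‖ : ℂ) ^ 2) * b - (1 + (‖b‖ : ℂ) ^ 2) * a) / (conj a * b - a * conj b)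

lemma ne_of_im_conj_mul_ne_zero {a b : ℂ} (h : (conj a * b).im ≠ 0) : b ≠ a := by
  rintro rfl
  simp [conj_mul', ← ofReal_pow] at h

lemma two_mul_geodesicCenter_sub {a b : ℂ} (h : (conj a * b).im ≠ 0) :
    2 * geodesicCenter a b - a - b =
      (b - a) * (1 - conj a * b).re / ((conj a * b).im * I) := by
  have hden : conj a * b - a * conj b ≠ 0 := by
    rw [show a * conj b = conj (conj a * b) by simp [mul_comm], sub_conj]
    exact mul_ne_zero (ofReal_ne_zero.mpr (mul_ne_zero two_ne_zero h)) I_ne_zero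
  rw [geodesicCenter, re_eq_add_conj, im_eq_sub_conj, ← mul_conj', ← mul_conj']
  simp only [map_sub, map_one, map_mul, conj_conj]
  field_simp
  ring

lemma sub_div_two_mul_geodesicCenter_sub {a b : ℂ} (h : (conj a * b).im ≠ 0) :
    (b - a) / (2 * geodesicCenter a b - a - b) =
      ((conj a * b).im / (1 - conj a * b).re : ℝ) * I := by
  have hba : b - a ≠ 0 := sub_ne_zero.mpr (ne_of_im_conj_mul_ne_zero h)
  rw [two_mul_geodesicCenter_sub h, mul_div_assoc, div_mul_cancel_left₀ hba, inv_div]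
  push_cast
  ring

theorem stmt_12_general (zk zk1 c : ℂ)
    (him : (conj zk * zk1).im ≠ 0)
    (hc : c = ((1 + (‖zk‖ : ℂ)^2) * zk1 - (1 + (‖zk1‖ : ℂ)^2) * zk) /
        (conj zk * zk1 - zk * conj zk1)) :
    ‖(zk1 - zk) / (2 * c - zk - zk1)‖ =
      |(conj zk * zk1).im / (1 - conj zk * zk1).re| := by
  rw [show c = geodesicCenter zk zk1 from hc, sub_div_two_mul_geodesicCenter_sub him, norm_mul,
    norm_I, mul_one, norm_real, Real.norm_eq_abs]

theorem stmt_12 (zk zk1 c : ℂ) (hzk : ‖zk‖ ≤ 1) (hzk1 : ‖zk1‖ ≤ 1)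
    (him : (conj zk * zk1).im ≠ 0)
    (hc : c = ((1 + (‖zk‖ : ℂ)^2) * zk1 - (1 + (‖zk1‖ : ℂ)^2) * zk) /
        (conj zk * zk1 - zk * conj zk1))
    (hden : 2 * c - zk - zk1 ≠ 0) (hre : (1 - conj zk * zk1).re ≠ 0) :
    ‖(zk1 - zk) / (2 * c - zk - zk1)‖ =
      |(conj zk * zk1).im / (1 - conj zk * zk1).re| :=
  stmt_12_general zk zk1 c him hc
end
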